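/- arXiv:2507.06105 — 2 statements merged into one kernel-verified Lean document; each statement's English description precedes it below -/
import Mathlib

section
/- Given an admissible inductive system (E_n, T_n) over C*-algebras (C_n), for every n ≥ 0 and all a, b ∈ Z_n, the distance in L = ℓ∞({C_n}) from the product ab to the set Z_{n+1} satisfies dist(ab, Z_{n+1}) ≤ e²·(∑_{k>n+1} ε_k)·(1+ε_{n+1})²·‖a‖‖b‖. -/
open Filter ENNReal
set_option linter.unusedSectionVars false

noncomputable section

variable {C : ℕ → Type*} [∀ n, NonUnitalNormedRing (C n)] [∀ n, StarRing (C n)]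
  [∀ n, CStarRing (C n)] [∀ n, NormedSpace ℂ (C n)] [∀ n, StarModule ℂ (C n)]
  [∀ n, IsScalarTower ℂ (C n) (C n)] [∀ n, SMulCommClass ℂ (C n) (C n)]
  [∀ n, CompleteSpace (C n)]

/-- `ψ : E → D` (with range inside `F ⊆ D`) is an `ε`-morphism: bounded with norm at most
`1 + ε`, approximately multiplicative with defect `ε`, and self-adjoint. -/
def IsEpsMorphism {A D : Type*} [NonUnitalNormedRing A] [StarRing A] [NormedSpace ℂ A]
    [NonUnitalNormedRing D] [StarRing D] [NormedSpace ℂ D]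
    (E : Submodule ℂ A) (F : Submodule ℂ D) (ψ : E →ₗ[ℂ] D) (ε : ℝ) : Prop :=
  (∀ x : E, ψ x ∈ F) ∧
  (∀ x : E, ‖ψ x‖ ≤ (1 + ε) * ‖(x : A)‖) ∧
  (∀ (x y : E) (h : (x : A) * (y : A) ∈ E),
      ‖ψ ⟨(x : A) * (y : A), h⟩ - ψ x * ψ y‖ ≤ ε * ‖(x : A)‖ * ‖(y : A)‖) ∧
  (∀ (x : E) (h : star (x : A) ∈ E), ψ ⟨star (x : A), h⟩ = star (ψ x))

/-- An admissible inductive system: `E n ⊆ C n` are finite-dimensional self-adjoint subspaces,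
`T n : E n → E (n+1)` (the paper's `T_{n+1}`) is an `ε (n+1)`-morphism with
`T n (E n) · T n (E n) ⊆ E (n+1)`, the `ε k` (`k ≥ 1`) are positive with `∑_{k≥1} ε k ≤ 1`. -/
def IsAdmissibleSystem (E : ∀ n, Submodule ℂ (C n)) (T : ∀ n, E n →ₗ[ℂ] E (n + 1))
    (ε : ℕ → ℝ) : Prop :=
  (∀ k, 1 ≤ k → 0 < ε k) ∧
  (∀ N, ∑ k ∈ Finset.Icc 1 N, ε k ≤ 1) ∧
  (∀ n, FiniteDimensional ℂ (E n)) ∧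
  (∀ n, ∀ x ∈ E n, star x ∈ E n) ∧
  (∀ n, IsEpsMorphism (E n) (E (n + 1)) ((E (n + 1)).subtype.comp (T n)) (ε (n + 1))) ∧
  (∀ n, ∀ x y : E n, ((T n x : C (n + 1)) * (T n y : C (n + 1))) ∈ E (n + 1))

/-- The iterated map `Titer E T n x m = T_{[n+m, n+1]}(x) ∈ E (n+m)`
(for `m = 0` this is `x` itself). -/
def Titer (E : ∀ n, Submodule ℂ (C n)) (T : ∀ n, E n →ₗ[ℂ] E (n + 1)) (n : ℕ) (x : E n) :
    ∀ m : ℕ, E (n + m)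
  | 0 => x
  | m + 1 => T (n + m) (Titer E T n x m)

/-- `θₙ(x)`: the sequence `(0, …, 0, x, T_{n+1}x, T_{n+2}T_{n+1}x, …)` (with `x` in
position `n`), as an element of `∀ k, C k`. -/
def theta (E : ∀ n, Submodule ℂ (C n)) (T : ∀ n, E n →ₗ[ℂ] E (n + 1)) (n : ℕ) (x : E n) :
    ∀ k, C k := fun k =>
  if h : n ≤ k then
    cast (congrArg C (Nat.add_sub_cancel' h)) ((Titer E T n x (k - n) : C (n + (k - n))))
  else 0

/-- `Z_n ⊆ L = ℓ∞({C_k})`: the bounded sequences `z` with `z n ∈ E n` and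
`z k = T_{[k,n+1]}(z n)` for all `k > n` (coordinates below `n` are arbitrary). -/
def ZSet (E : ∀ n, Submodule ℂ (C n)) (T : ∀ n, E n →ₗ[ℂ] E (n + 1)) (n : ℕ) :
    Set (lp C ∞) :=
  {z | ∃ h : z n ∈ E n, ∀ k, n ≤ k → z k = theta E T n ⟨z n, h⟩ k}

/-- `Z`: the norm closure of `⋃ n, Z_n` in `L = ℓ∞({C_k})`. -/
def ZAlg (E : ∀ n, Submodule ℂ (C n)) (T : ∀ n, E n →ₗ[ℂ] E (n + 1)) : Set (lp C ∞) :=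
  closure (⋃ n, ZSet E T n)

/-- `c₀({C_k}) ⊆ L`: the sequences whose coordinate norms tend to `0`. -/
def c0Set : Set (lp C ∞) := {z | Tendsto (fun k => ‖z k‖) atTop (nhds 0)}

section Aux

variable (E : ∀ n, Submodule ℂ (C n)) (T : ∀ n, E n →ₗ[ℂ] E (n + 1))

lemma cast_titer {m j j' : ℕ} (x : E m) (h : j = j') (he : m + j = m + j') :
    cast (congrArg C he) ((Titer E T m x j : C (m + j))) = (Titer E T m x j' : C (m + j')) := by
  subst h; exact cast_eq _ _

lemma theta_add (m j : ℕ) (x : E m) :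
    theta E T m x (m + j) = (Titer E T m x j : C (m + j)) := by
  unfold theta
  rw [dif_pos (Nat.le_add_right m j)]
  exact cast_titer E T x (by omega) (Nat.add_sub_cancel' (Nat.le_add_right m j))

lemma ZSet.rec (n : ℕ) {a : lp C ∞} (ha : a ∈ ZSet E T n) {k : ℕ} (hk : n ≤ k) :
    ∃ h : a k ∈ E k, a (k + 1) = (T k ⟨a k, h⟩ : C (k + 1)) := by
  obtain ⟨j, rfl⟩ := Nat.exists_eq_add_of_le hk
  obtain ⟨hm, hco⟩ := ha
  have h1 : a (n + j) = (Titer E T n ⟨a n, hm⟩ j : C (n + j)) :=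
    (hco (n + j) (Nat.le_add_right n j)).trans (theta_add E T n j _)
  have h2 : a (n + j + 1) = (Titer E T n ⟨a n, hm⟩ (j + 1) : C (n + (j + 1))) :=
    (hco (n + j + 1) (by omega)).trans (theta_add E T n (j + 1) _)
  have hmem : a (n + j) ∈ E (n + j) := by rw [h1]; exact (Titer E T n ⟨a n, hm⟩ j).2
  refine ⟨hmem, ?_⟩
  rw [h2]
  have : (⟨a (n + j), hmem⟩ : E (n + j)) = Titer E T n ⟨a n, hm⟩ j := Subtype.ext h1
  rw [this]
  rfl

end Aux

section Aux2

variable (E : ∀ n, Submodule ℂ (C n)) (T : ∀ n, E n →ₗ[ℂ] E (n + 1)) (ε : ℕ → ℝ)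

lemma window_sum_le_one (hsys : IsAdmissibleSystem E T ε) (s j : ℕ) :
    ∑ i ∈ Finset.range j, ε (s + 1 + i) ≤ 1 := by
  have h1 : ∑ i ∈ Finset.range j, ε (s + 1 + i) = ∑ k ∈ Finset.Ico (s + 1) (s + 1 + j), ε k := by
    rw [Finset.sum_Ico_eq_sum_range, Nat.add_sub_cancel_left]
  rw [h1]
  calc ∑ k ∈ Finset.Ico (s + 1) (s + 1 + j), ε k
      ≤ ∑ k ∈ Finset.Icc 1 (s + j), ε k := by
        apply Finset.sum_le_sum_of_subset_of_nonneg
        · intro k hk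
          simp only [Finset.mem_Ico] at hk
          simp only [Finset.mem_Icc]
          omega
        · intro k hk _
          simp only [Finset.mem_Icc] at hk
          exact (hsys.1 k hk.1).le
    _ ≤ 1 := hsys.2.1 (s + j)

lemma window_nonneg (hsys : IsAdmissibleSystem E T ε) (s i : ℕ) : 0 ≤ ε (s + 1 + i) :=
  (hsys.1 _ (by omega)).le

lemma window_prod_le_exp_one (hsys : IsAdmissibleSystem E T ε) (s j : ℕ) :
    ∏ i ∈ Finset.range j, (1 + ε (s + 1 + i)) ≤ Real.exp 1 := by
  calc ∏ i ∈ Finset.range j, (1 + ε (s + 1 + i))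
      ≤ ∏ i ∈ Finset.range j, Real.exp (ε (s + 1 + i)) := by
        apply Finset.prod_le_prod
        · intro i _
          have := window_nonneg E T ε hsys s i
          linarith
        · intro i _
          have := Real.add_one_le_exp (ε (s + 1 + i))
          linarith
    _ = Real.exp (∑ i ∈ Finset.range j, ε (s + 1 + i)) := (Real.exp_sum _ _).symm
    _ ≤ Real.exp 1 := Real.exp_le_exp.2 (window_sum_le_one E T ε hsys s j)

lemma window_prod_one_le (hsys : IsAdmissibleSystem E T ε) (s j : ℕ) :
    1 ≤ ∏ i ∈ Finset.range j, (1 + ε (s + 1 + i)) := by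
  have h : ∏ i ∈ Finset.range j, (1:ℝ) ≤ ∏ i ∈ Finset.range j, (1 + ε (s + 1 + i)) :=
    Finset.prod_le_prod (fun i _ => zero_le_one)
      (fun i _ => by have := window_nonneg E T ε hsys s i; linarith)
  simpa using h

lemma titer_norm (hsys : IsAdmissibleSystem E T ε) (m : ℕ) (x : E m) (j : ℕ) :
    ‖(Titer E T m x j : C (m + j))‖ ≤
      (∏ i ∈ Finset.range j, (1 + ε (m + 1 + i))) * ‖(x : C m)‖ := by
  induction j with
  | zero => simp [Titer]
  | succ j ih =>
    have hT : ‖(T (m + j) (Titer E T m x j) : C (m + j + 1))‖ ≤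
        (1 + ε (m + j + 1)) * ‖(Titer E T m x j : C (m + j))‖ :=
      (hsys.2.2.2.2.1 (m + j)).2.1 (Titer E T m x j)
    have hstep : (Titer E T m x (j + 1) : C (m + (j + 1))) =
        (T (m + j) (Titer E T m x j) : C (m + j + 1)) := rfl
    rw [hstep, Finset.prod_range_succ]
    have hidx : ε (m + 1 + j) = ε (m + j + 1) := by congr 1; omega
    have hposQ : (0:ℝ) ≤ ∏ i ∈ Finset.range j, (1 + ε (m + 1 + i)) :=
      le_trans zero_le_one (window_prod_one_le E T ε hsys m j)
    have hfac : (0:ℝ) ≤ 1 + ε (m + j + 1) := by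
      have := window_nonneg E T ε hsys m j
      rw [hidx] at this
      linarith
    calc ‖(T (m + j) (Titer E T m x j) : C (m + j + 1))‖
        ≤ (1 + ε (m + j + 1)) * ‖(Titer E T m x j : C (m + j))‖ := hT
      _ ≤ (1 + ε (m + j + 1)) * ((∏ i ∈ Finset.range j, (1 + ε (m + 1 + i))) * ‖(x : C m)‖) :=
          mul_le_mul_of_nonneg_left ih hfac
      _ = (∏ i ∈ Finset.range j, (1 + ε (m + 1 + i))) * (1 + ε (m + 1 + j)) * ‖(x : C m)‖ := by
          rw [hidx]; ring

lemma titer_mul_mem (hsys : IsAdmissibleSystem E T ε) (m : ℕ) (x y : E m)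
    (hw : (x : C m) * (y : C m) ∈ E m) :
    ∀ j, ((Titer E T m x j : C (m + j)) * (Titer E T m y j : C (m + j))) ∈ E (m + j)
  | 0 => hw
  | j + 1 => hsys.2.2.2.2.2 (m + j) (Titer E T m x j) (Titer E T m y j)

end Aux2

lemma numeric_step {e ε' S Q nx ny nX nY D : ℝ}
    (he : 1 ≤ e) (hε' : 0 ≤ ε') (hS : 0 ≤ S) (hQ1 : 1 ≤ Q) (hQe : Q ≤ e)
    (hnx : 0 ≤ nx) (hny : 0 ≤ ny) (hnX0 : 0 ≤ nX) (hnY0 : 0 ≤ nY)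
    (hX : nX ≤ Q * nx) (hY : nY ≤ Q * ny) (hD : D ≤ e * S * Q * (nx * ny)) :
    ε' * nX * nY + (1 + ε') * D ≤ e * (S + ε') * (Q * (1 + ε')) * (nx * ny) := by
  have hQ0 : 0 ≤ Q := le_trans zero_le_one hQ1
  have hP0 : 0 ≤ nx * ny := mul_nonneg hnx hny
  have h1 : nX * nY ≤ (Q * nx) * (Q * ny) :=
    mul_le_mul hX hY hnY0 (mul_nonneg hQ0 hnx)
  have heq : (Q * nx) * (Q * ny) = Q * Q * (nx * ny) := by ring
  have hQ2 : Q * Q ≤ e * (1 + ε') * Q := by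
    nlinarith [mul_le_mul_of_nonneg_right hQe hQ0,
      mul_nonneg (mul_nonneg (le_trans zero_le_one he) hε') hQ0]
  have step1 : ε' * nX * nY ≤ ε' * (Q * Q * (nx * ny)) := by
    rw [mul_assoc]
    exact mul_le_mul_of_nonneg_left (heq ▸ h1) hε'
  have step2 : ε' * (Q * Q * (nx * ny)) ≤ ε' * (e * (1 + ε') * Q * (nx * ny)) :=
    mul_le_mul_of_nonneg_left (mul_le_mul_of_nonneg_right hQ2 hP0) hε'
  have t2 : (1 + ε') * D ≤ (1 + ε') * (e * S * Q * (nx * ny)) :=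
    mul_le_mul_of_nonneg_left hD (by linarith)
  nlinarith [step1, step2, t2]

section Key

variable (E : ∀ n, Submodule ℂ (C n)) (T : ∀ n, E n →ₗ[ℂ] E (n + 1)) (ε : ℕ → ℝ)

lemma step_estimate (hsys : IsAdmissibleSystem E T ε) (L : ℕ) (X Y W : E L)
    (hab : (X : C L) * (Y : C L) ∈ E L) :
    ‖(T L X : C (L + 1)) * (T L Y : C (L + 1)) - (T L W : C (L + 1))‖ ≤
      ε (L + 1) * ‖(X : C L)‖ * ‖(Y : C L)‖ +
        (1 + ε (L + 1)) * ‖(X : C L) * (Y : C L) - (W : C L)‖ := by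
  have hsplit : (T L X : C (L + 1)) * (T L Y : C (L + 1)) - (T L W : C (L + 1)) =
      ((T L X : C (L + 1)) * (T L Y : C (L + 1))
        - (T L (⟨(X : C L) * (Y : C L), hab⟩ : E L) : C (L + 1)))
      + ((T L (⟨(X : C L) * (Y : C L), hab⟩ : E L) : C (L + 1)) - (T L W : C (L + 1))) := by
    abel
  have ht1 : ‖(T L X : C (L + 1)) * (T L Y : C (L + 1))
      - (T L (⟨(X : C L) * (Y : C L), hab⟩ : E L) : C (L + 1))‖ ≤
      ε (L + 1) * ‖(X : C L)‖ * ‖(Y : C L)‖ := by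
    rw [norm_sub_rev]
    exact (hsys.2.2.2.2.1 L).2.2.1 X Y hab
  have hsub : (T L (⟨(X : C L) * (Y : C L), hab⟩ : E L) : C (L + 1)) - (T L W : C (L + 1)) =
      ((T L ((⟨(X : C L) * (Y : C L), hab⟩ : E L) - W) : E (L + 1)) : C (L + 1)) := by
    rw [map_sub]; rfl
  have ht2 : ‖(T L (⟨(X : C L) * (Y : C L), hab⟩ : E L) : C (L + 1)) - (T L W : C (L + 1))‖ ≤
      (1 + ε (L + 1)) * ‖(X : C L) * (Y : C L) - (W : C L)‖ := by
    rw [hsub]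
    have := (hsys.2.2.2.2.1 L).2.1 ((⟨(X : C L) * (Y : C L), hab⟩ : E L) - W)
    simpa using this
  calc ‖(T L X : C (L + 1)) * (T L Y : C (L + 1)) - (T L W : C (L + 1))‖
      ≤ ‖(T L X : C (L + 1)) * (T L Y : C (L + 1))
          - (T L (⟨(X : C L) * (Y : C L), hab⟩ : E L) : C (L + 1))‖
        + ‖(T L (⟨(X : C L) * (Y : C L), hab⟩ : E L) : C (L + 1)) - (T L W : C (L + 1))‖ := by
        rw [hsplit]; exact norm_add_le _ _
    _ ≤ _ := add_le_add ht1 ht2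

lemma key_estimate (hsys : IsAdmissibleSystem E T ε) (m : ℕ) (x y : E m)
    (hw : (T m x : C (m + 1)) * (T m y : C (m + 1)) ∈ E (m + 1)) (j : ℕ) :
    ‖(Titer E T (m + 1) (T m x) j : C (m + 1 + j)) * (Titer E T (m + 1) (T m y) j : C (m + 1 + j))
      - (Titer E T (m + 1)
          (⟨(T m x : C (m + 1)) * (T m y : C (m + 1)), hw⟩ : E (m + 1)) j : C (m + 1 + j))‖
    ≤ Real.exp 1 * (∑ i ∈ Finset.range j, ε (m + 1 + 1 + i)) *
        (∏ i ∈ Finset.range j, (1 + ε (m + 1 + 1 + i))) *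
        (‖(T m x : C (m + 1))‖ * ‖(T m y : C (m + 1))‖) := by
  induction j with
  | zero => simp [Titer]
  | succ j ih =>
    have hab : (Titer E T (m + 1) (T m x) j : C (m + 1 + j)) *
        (Titer E T (m + 1) (T m y) j : C (m + 1 + j)) ∈ E (m + 1 + j) :=
      titer_mul_mem E T ε hsys (m + 1) (T m x) (T m y) hw j
    have hstep := step_estimate E T ε hsys (m + 1 + j)
      (Titer E T (m + 1) (T m x) j) (Titer E T (m + 1) (T m y) j)
      (Titer E T (m + 1) (⟨(T m x : C (m + 1)) * (T m y : C (m + 1)), hw⟩ : E (m + 1)) j) hab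
    have hεidx : ε (m + 1 + 1 + j) = ε (m + 1 + j + 1) := by congr 1; omega
    rw [Finset.sum_range_succ, Finset.prod_range_succ, hεidx]
    refine le_trans hstep ?_
    exact numeric_step
      (by have := Real.add_one_le_exp (1:ℝ); linarith)
      ((hsys.1 (m + 1 + j + 1) (by omega)).le)
      (Finset.sum_nonneg fun i _ => window_nonneg E T ε hsys (m + 1) i)
      (window_prod_one_le E T ε hsys (m + 1) j)
      (window_prod_le_exp_one E T ε hsys (m + 1) j)
      (norm_nonneg _) (norm_nonneg _) (norm_nonneg _) (norm_nonneg _)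
      (titer_norm E T ε hsys (m + 1) (T m x) j)
      (titer_norm E T ε hsys (m + 1) (T m y) j)
      ih

end Key

lemma numeric_final {e t S Q p q na nb εn : ℝ}
    (he : 1 ≤ e) (hS0 : 0 ≤ S) (hSt : S ≤ t) (hQ1 : 1 ≤ Q) (hQe : Q ≤ e)
    (hεn : 0 ≤ εn) (hna : 0 ≤ na) (hnb : 0 ≤ nb)
    (hp0 : 0 ≤ p) (hq0 : 0 ≤ q) (hp : p ≤ (1 + εn) * na) (hq : q ≤ (1 + εn) * nb) :
    e * S * Q * (p * q) ≤ (e * e) * t * (1 + εn) ^ 2 * (na * nb) := by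
  have he0 : (0:ℝ) ≤ e := le_trans zero_le_one he
  have hQ0 : (0:ℝ) ≤ Q := le_trans zero_le_one hQ1
  have ht0 : 0 ≤ t := le_trans hS0 hSt
  calc e * S * Q * (p * q)
      ≤ e * S * Q * (((1 + εn) * na) * ((1 + εn) * nb)) := by
        have h1 : p * q ≤ ((1 + εn) * na) * ((1 + εn) * nb) :=
          mul_le_mul hp hq hq0 (by positivity)
        exact mul_le_mul_of_nonneg_left h1 (by positivity)
    _ ≤ e * t * e * (((1 + εn) * na) * ((1 + εn) * nb)) := by
        refine mul_le_mul_of_nonneg_right ?_ (by positivity)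
        nlinarith [mul_le_mul hSt hQe hQ0 ht0]
    _ = (e * e) * t * (1 + εn) ^ 2 * (na * nb) := by ring

/-- The candidate element of `Z_{n+1}` approximating `a*b`. -/
def zSeq (E : ∀ n, Submodule ℂ (C n)) (T : ∀ n, E n →ₗ[ℂ] E (n + 1)) (n : ℕ)
    (w : E (n + 1)) (f : ∀ k, C k) : ∀ k, C k := fun k =>
  if n + 1 ≤ k then theta E T (n + 1) w k else f k
/-- For an admissible inductive system and `a, b ∈ Z_n`, the distance in
`L = ℓ∞({C_k})` from `a*b` to `Z_{n+1}` is at most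
`e² (∑_{k>n+1} ε_k) (1+ε_{n+1})² ‖a‖ ‖b‖`. -/
theorem infDist_mul_ZSet_succ (E : ∀ n, Submodule ℂ (C n)) (T : ∀ n, E n →ₗ[ℂ] E (n + 1))
    (ε : ℕ → ℝ) (hsys : IsAdmissibleSystem E T ε) (n : ℕ)
    (a b : lp C ∞) (ha : a ∈ ZSet E T n) (hb : b ∈ ZSet E T n) :
    Metric.infDist (a * b) (ZSet E T (n + 1)) ≤
      Real.exp 2 * (∑' j : ℕ, ε (n + 2 + j)) * (1 + ε (n + 1)) ^ 2 * (‖a‖ * ‖b‖) := by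

  classical
  -- basic data
  have hT := hsys.2.2.2.2.1
  have hmul := hsys.2.2.2.2.2
  have hεn1 : 0 ≤ ε (n + 1) := (hsys.1 (n + 1) (by omega)).le
  have ham : a n ∈ E n := by obtain ⟨h, -⟩ := id ha; exact h
  have hbm : b n ∈ E n := by obtain ⟨h, -⟩ := id hb; exact h
  set x0 : E n := ⟨a n, ham⟩ with hx0
  set y0 : E n := ⟨b n, hbm⟩ with hy0
  have hw : (T n x0 : C (n + 1)) * (T n y0 : C (n + 1)) ∈ E (n + 1) := hmul n x0 y0
  set w : E (n + 1) := ⟨(T n x0 : C (n + 1)) * (T n y0 : C (n + 1)), hw⟩ with hwdef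
  -- coordinates of a and b
  have hacoord : ∀ j, ∃ h : a (n + 1 + j) ∈ E (n + 1 + j),
      (⟨a (n + 1 + j), h⟩ : E (n + 1 + j)) = Titer E T (n + 1) (T n x0) j := by
    intro j
    induction j with
    | zero =>
      obtain ⟨h0, e0⟩ := ZSet.rec E T n ha (le_refl n)
      have hmem : a (n + 1) ∈ E (n + 1) := by rw [e0]; exact (T n ⟨a n, h0⟩).2
      exact ⟨hmem, Subtype.ext e0⟩
    | succ j ihj =>
      obtain ⟨hj, ej⟩ := ihj
      obtain ⟨hj', ej'⟩ := ZSet.rec E T n ha (show n ≤ n + 1 + j by omega)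
      have hmem : a (n + 1 + j + 1) ∈ E (n + 1 + j + 1) := by
        rw [ej']; exact (T (n + 1 + j) ⟨a (n + 1 + j), hj'⟩).2
      refine ⟨hmem, Subtype.ext ?_⟩
      show a (n + 1 + (j + 1)) = (Titer E T (n + 1) (T n x0) (j + 1) : C (n + 1 + (j + 1)))
      rw [show a (n + 1 + (j + 1)) = (T (n + 1 + j) ⟨a (n + 1 + j), hj'⟩ : C (n + 1 + j + 1)) from ej']
      have hsx : (⟨a (n + 1 + j), hj'⟩ : E (n + 1 + j)) = Titer E T (n + 1) (T n x0) j := ej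
      rw [hsx]
      rfl
  have hbcoord : ∀ j, ∃ h : b (n + 1 + j) ∈ E (n + 1 + j),
      (⟨b (n + 1 + j), h⟩ : E (n + 1 + j)) = Titer E T (n + 1) (T n y0) j := by
    intro j
    induction j with
    | zero =>
      obtain ⟨h0, e0⟩ := ZSet.rec E T n hb (le_refl n)
      have hmem : b (n + 1) ∈ E (n + 1) := by rw [e0]; exact (T n ⟨b n, h0⟩).2
      exact ⟨hmem, Subtype.ext e0⟩
    | succ j ihj =>
      obtain ⟨hj, ej⟩ := ihj
      obtain ⟨hj', ej'⟩ := ZSet.rec E T n hb (show n ≤ n + 1 + j by omega)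
      have hmem : b (n + 1 + j + 1) ∈ E (n + 1 + j + 1) := by
        rw [ej']; exact (T (n + 1 + j) ⟨b (n + 1 + j), hj'⟩).2
      refine ⟨hmem, Subtype.ext ?_⟩
      show b (n + 1 + (j + 1)) = (Titer E T (n + 1) (T n y0) (j + 1) : C (n + 1 + (j + 1)))
      rw [show b (n + 1 + (j + 1)) = (T (n + 1 + j) ⟨b (n + 1 + j), hj'⟩ : C (n + 1 + j + 1)) from ej']
      have hsy : (⟨b (n + 1 + j), hj'⟩ : E (n + 1 + j)) = Titer E T (n + 1) (T n y0) j := ej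
      rw [hsy]
      rfl
  -- the candidate sequence
  have hzcoord : ∀ j, zSeq E T n w (fun k => a k * b k) (n + 1 + j) = (Titer E T (n + 1) w j : C (n + 1 + j)) := by
    intro j
    exact (if_pos (by omega)).trans (theta_add E T (n + 1) j w)
  have hzlt : ∀ k, ¬ n + 1 ≤ k → zSeq E T n w (fun k => a k * b k) k = a k * b k := by
    intro k hk
    exact if_neg hk
  -- membership in ℓ∞
  have hQle : ∀ j, (∏ i ∈ Finset.range j, (1 + ε (n + 1 + 1 + i))) ≤ Real.exp 1 :=
    fun j => window_prod_le_exp_one E T ε hsys (n + 1) j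
  have hmemlp : Memℓp (zSeq E T n w (fun k => a k * b k)) ∞ := by
    apply memℓp_infty
    refine ⟨max (‖a‖ * ‖b‖) (Real.exp 1 * ‖(w : C (n + 1))‖), ?_⟩
    rintro r ⟨k, rfl⟩
    show ‖zSeq E T n w (fun k => a k * b k) k‖ ≤ _
    by_cases hk : n + 1 ≤ k
    · obtain ⟨j, rfl⟩ := Nat.exists_eq_add_of_le hk
      rw [hzcoord j]
      refine le_trans (titer_norm E T ε hsys (n + 1) w j) (le_trans ?_ (le_max_right _ _))
      exact mul_le_mul_of_nonneg_right (hQle j) (norm_nonneg _)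
    · rw [hzlt k hk]
      refine le_trans (norm_mul_le _ _) (le_trans ?_ (le_max_left _ _))
      exact mul_le_mul (lp.norm_apply_le_norm ENNReal.top_ne_zero a k)
        (lp.norm_apply_le_norm ENNReal.top_ne_zero b k) (norm_nonneg _) (norm_nonneg _)
  set z : lp C ∞ := ⟨zSeq E T n w (fun k => a k * b k), hmemlp⟩ with hzdef
  have hzapp : ∀ k, z k = zSeq E T n w (fun k => a k * b k) k := fun k => rfl
  -- z ∈ ZSet (n+1)
  have hz1 : z (n + 1) = (w : C (n + 1)) := by
    rw [hzapp]
    exact (if_pos le_rfl).trans (theta_add E T (n + 1) 0 w)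
  have hzmem : z (n + 1) ∈ E (n + 1) := by rw [hz1]; exact w.2
  have hzZ : z ∈ ZSet E T (n + 1) := by
    refine ⟨hzmem, ?_⟩
    intro k hk
    have hsw : (⟨z (n + 1), hzmem⟩ : E (n + 1)) = w := Subtype.ext hz1
    rw [hsw, hzapp]
    exact if_pos hk
  -- summability
  have hsummand : ∀ i : ℕ, 0 ≤ ε (n + 2 + i) := fun i => window_nonneg E T ε hsys (n + 1) i
  have hsum : Summable (fun i => ε (n + 2 + i)) :=
    summable_of_sum_range_le hsummand (fun j => window_sum_le_one E T ε hsys (n + 1) j)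
  have htsum0 : 0 ≤ ∑' j : ℕ, ε (n + 2 + j) := tsum_nonneg hsummand
  have hRHS0 : 0 ≤ Real.exp 2 * (∑' j : ℕ, ε (n + 2 + j)) * (1 + ε (n + 1)) ^ 2 * (‖a‖ * ‖b‖) := by
    have := Real.exp_pos 2
    positivity
  have he1 : (1:ℝ) ≤ Real.exp 1 := by have := Real.add_one_le_exp (1:ℝ); linarith
  -- norm bounds
  have hpa : ‖(T n x0 : C (n + 1))‖ ≤ (1 + ε (n + 1)) * ‖a‖ :=
    le_trans ((hT n).2.1 x0)
      (mul_le_mul_of_nonneg_left (lp.norm_apply_le_norm ENNReal.top_ne_zero a n) (by linarith))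
  have hpb : ‖(T n y0 : C (n + 1))‖ ≤ (1 + ε (n + 1)) * ‖b‖ :=
    le_trans ((hT n).2.1 y0)
      (mul_le_mul_of_nonneg_left (lp.norm_apply_le_norm ENNReal.top_ne_zero b n) (by linarith))
  -- conclude
  refine le_trans (Metric.infDist_le_dist_of_mem hzZ) ?_
  rw [dist_eq_norm]
  apply lp.norm_le_of_forall_le hRHS0
  intro k
  have hdiff : (a * b - z) k = a k * b k - z k := by
    rw [lp.coeFn_sub, Pi.sub_apply, lp.infty_coeFn_mul, Pi.mul_apply]
  rw [hdiff]
  by_cases hk : n + 1 ≤ k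
  · obtain ⟨j, rfl⟩ := Nat.exists_eq_add_of_le hk
    obtain ⟨hja, eja⟩ := hacoord j
    obtain ⟨hjb, ejb⟩ := hbcoord j
    have ea : a (n + 1 + j) = (Titer E T (n + 1) (T n x0) j : C (n + 1 + j)) := congrArg Subtype.val eja
    have eb : b (n + 1 + j) = (Titer E T (n + 1) (T n y0) j : C (n + 1 + j)) := congrArg Subtype.val ejb
    rw [hzapp, hzcoord j, ea, eb]
    refine le_trans (key_estimate E T ε hsys n x0 y0 hw j) ?_
    have hSt : (∑ i ∈ Finset.range j, ε (n + 1 + 1 + i)) ≤ ∑' i : ℕ, ε (n + 2 + i) :=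
      Summable.sum_le_tsum (Finset.range j) (fun i _ => hsummand i) hsum
    have hS0 : 0 ≤ ∑ i ∈ Finset.range j, ε (n + 1 + 1 + i) :=
      Finset.sum_nonneg fun i _ => hsummand i
    rw [show (2:ℝ) = 1 + 1 by norm_num, Real.exp_add]
    exact numeric_final he1 hS0 hSt (window_prod_one_le E T ε hsys (n + 1) j) (hQle j)
      hεn1 (norm_nonneg a) (norm_nonneg b) (norm_nonneg _) (norm_nonneg _) hpa hpb
  · rw [hzapp, hzlt k hk, sub_self, norm_zero]
    exact hRHS0
end
end

section
/- Given an admissible inductive system (E_n, T_n) over C*-algebras (C_n), the set Z (the norm closure of ∪_n Z_n in L = ℓ∞({C_n})) is a closed self-adjoint subalgebra of L (i.e. a C*-subalgebra: it is a closed linear subspace, closed under multiplication, and closed under the star operation), and it contains the ideal c₀({C_n}). -/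
/-!
Every `Z_n` is a linear subspace, `Z_n ⊆ Z_{n+1}`, and `Z_n` is star-closed because the `T_k`
commute with `*`; so `Z` is the closure of an increasing union of star-closed subspaces.
A `c₀` sequence is approximated by its truncations, which vanish from some `n` on and hence lie
in `Z_n`. For `z, w ∈ Z_n` and `p > n`, the sequence that equals `zw` below `p` and `θ_p(z_p w_p)`
from `p` on lies in `Z_p`. Since each `T_{k+1}` is an `ε_{k+1}`-morphism, its distance `e_k` to
`zw` in coordinate `k` obeys `e_{k+1} ≤ ε_{k+1}‖z‖‖w‖ + (1 + ε_{k+1}) e_k`, so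
`e_k ≤ (exp (∑_{j > p} ε_j) - 1)‖z‖‖w‖`, which tends to `0` as `p → ∞`.
-/

open Filter ENNReal

open Topology

lemma lp.exists_coeFn_eq_norm_sub_le {ι : Type*} {B : ι → Type*} [∀ i, NormedAddCommGroup (B i)]
    (y : lp B ∞) (v : ∀ i, B i) {r : ℝ} (hr : 0 ≤ r) (hv : ∀ i, ‖y i - v i‖ ≤ r) :
    ∃ u : lp B ∞, ⇑u = v ∧ ‖y - u‖ ≤ r := by
  have hbdd : ∀ i, ‖v i‖ ≤ ‖y‖ + r := fun i =>
    calc ‖v i‖ ≤ ‖y i‖ + ‖y i - v i‖ := norm_le_norm_add_norm_sub _ _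
      _ ≤ ‖y‖ + r := add_le_add (lp.norm_apply_le_norm top_ne_zero y i) (hv i)
  refine ⟨⟨v, memℓp_infty ⟨‖y‖ + r, by rintro - ⟨i, rfl⟩; exact hbdd i⟩⟩, rfl, ?_⟩
  exact lp.norm_le_of_forall_le hr hv

lemma IsEpsMorphism.norm_mul_sub_le {A D : Type*} [NonUnitalNormedRing A] [StarRing A]
    [NormedSpace ℂ A] [NonUnitalNormedRing D] [StarRing D] [NormedSpace ℂ D]
    {E : Submodule ℂ A} {F : Submodule ℂ D} {ψ : E →ₗ[ℂ] D} {ε : ℝ}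
    (hψ : IsEpsMorphism E F ψ ε) (a b d : E) (hab : (a : A) * b ∈ E) :
    ‖ψ a * ψ b - ψ d‖ ≤ ε * ‖(a : A)‖ * ‖(b : A)‖ + (1 + ε) * ‖(a : A) * b - d‖ := by
  set c : E := ⟨a * b, hab⟩
  calc ‖ψ a * ψ b - ψ d‖ = ‖-(ψ c - ψ a * ψ b) + ψ (c - d)‖ := by
        rw [map_sub]; abel_nf
    _ ≤ ‖ψ c - ψ a * ψ b‖ + ‖ψ (c - d)‖ := by
        rw [← norm_neg (ψ c - ψ a * ψ b)]; exact norm_add_le _ _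
    _ ≤ ε * ‖(a : A)‖ * ‖(b : A)‖ + (1 + ε) * ‖(a : A) * b - d‖ :=
        add_le_add (hψ.2.2.1 a b hab) (hψ.2.1 (c - d))

lemma sum_Ico_le_tsum_nat_add {f : ℕ → ℝ} (hf : Summable f) (hf0 : ∀ j, 0 ≤ f j) (p k : ℕ) :
    ∑ j ∈ Finset.Ico p k, f j ≤ ∑' j, f (j + p) := by
  rw [Finset.sum_Ico_eq_sum_range]
  simp_rw [add_comm p]
  exact Summable.sum_le_tsum _ (fun j _ => hf0 _) ((summable_nat_add_iff p).2 hf)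

section InductiveSystem

variable {C : ℕ → Type*} [∀ n, NonUnitalNormedRing (C n)] [∀ n, NormedSpace ℂ (C n)]
  (E : ∀ n, Submodule ℂ (C n)) (T : ∀ n, E n →ₗ[ℂ] E (n + 1))

lemma theta_self_add (n : ℕ) (x : E n) (m : ℕ) :
    theta E T n x (n + m) = (Titer E T n x m : C (n + m)) := by
  have key : ∀ j, j = m → HEq (Titer E T n x j : C (n + j)) (Titer E T n x m : C (n + m)) := by
    rintro j rfl; rfl
  rw [theta, dif_pos (Nat.le_add_right n m), cast_eq_iff_heq]
  exact key _ (by omega)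

lemma theta_self (n : ℕ) (x : E n) : theta E T n x n = x :=
  theta_self_add E T n x 0

lemma theta_mem (n : ℕ) (x : E n) {k : ℕ} (hk : n ≤ k) : theta E T n x k ∈ E k := by
  obtain ⟨m, rfl⟩ := Nat.exists_eq_add_of_le hk
  rw [theta_self_add]
  exact (Titer E T n x m).2

lemma theta_succ (n : ℕ) (x : E n) {k : ℕ} (hk : n ≤ k) :
    theta E T n x (k + 1) = T k ⟨theta E T n x k, theta_mem E T n x hk⟩ := by
  obtain ⟨m, rfl⟩ := Nat.exists_eq_add_of_le hk
  have hx : (⟨theta E T n x (n + m), theta_mem E T n x hk⟩ : E (n + m)) = Titer E T n x m :=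
    Subtype.ext (theta_self_add E T n x m)
  rw [hx]
  exact theta_self_add E T n x (m + 1)

lemma theta_zero (n k : ℕ) : theta E T n 0 k = 0 := by
  by_cases hk : n ≤ k
  · obtain ⟨m, rfl⟩ := Nat.exists_eq_add_of_le hk
    have hTiter : ∀ m, Titer E T n 0 m = 0 := by
      intro m
      induction m with
      | zero => rfl
      | succ m ih => rw [Titer, ih, map_zero]
    rw [theta_self_add, hTiter]
    rfl
  · simp [theta, hk]

lemma mem_zSet_of_eq_theta {n : ℕ} (x : E n) {z : lp C ∞}
    (hz : ∀ k, n ≤ k → z k = theta E T n x k) : z ∈ ZSet E T n := by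
  have hx : z n = x := (hz n le_rfl).trans (theta_self E T n x)
  refine ⟨hx ▸ x.2, fun k hk => ?_⟩
  rw [hz k hk]
  congr
  exact Subtype.ext hx.symm

lemma mem_zSet_of_forall_eq_zero {n : ℕ} {z : lp C ∞} (hz : ∀ k, n ≤ k → z k = 0) :
    z ∈ ZSet E T n :=
  mem_zSet_of_eq_theta E T 0 fun k hk => (hz k hk).trans (theta_zero E T n k).symm

lemma mem_zSet_iff {n : ℕ} {z : lp C ∞} :
    z ∈ ZSet E T n ↔ ∀ k, n ≤ k → ∃ hk : z k ∈ E k, z (k + 1) = T k ⟨z k, hk⟩ := by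
  constructor
  · rintro ⟨hn, hz⟩ k hk
    refine ⟨hz k hk ▸ theta_mem E T n _ hk, ?_⟩
    rw [hz (k + 1) (hk.trans k.le_succ), theta_succ E T n _ hk]
    congr
    exact (hz k hk).symm
  · intro hz
    obtain ⟨hn, -⟩ := hz n le_rfl
    refine ⟨hn, fun k hk => ?_⟩
    induction k, hk using Nat.le_induction with
    | base => exact (theta_self E T n ⟨z n, hn⟩).symm
    | succ k hk ih =>
      obtain ⟨hkE, hstep⟩ := hz k hk
      rw [hstep, theta_succ E T n _ hk]
      congr

lemma zSet_mono {n m : ℕ} (hnm : n ≤ m) : ZSet E T n ⊆ ZSet E T m := by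
  intro z hz
  rw [mem_zSet_iff] at hz ⊢
  exact fun k hk => hz k (hnm.trans hk)

lemma add_mem_zSet {n : ℕ} {z w : lp C ∞} (hz : z ∈ ZSet E T n) (hw : w ∈ ZSet E T n) :
    z + w ∈ ZSet E T n := by
  rw [mem_zSet_iff] at hz hw ⊢
  intro k hk
  obtain ⟨hzk, hz⟩ := hz k hk
  obtain ⟨hwk, hw⟩ := hw k hk
  refine ⟨add_mem hzk hwk, ?_⟩
  change z (k + 1) + w (k + 1) = T k (⟨z k, hzk⟩ + ⟨w k, hwk⟩)
  rw [hz, hw, map_add]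
  rfl

lemma smul_mem_zSet {n : ℕ} (c : ℂ) {z : lp C ∞} (hz : z ∈ ZSet E T n) :
    c • z ∈ ZSet E T n := by
  rw [mem_zSet_iff] at hz ⊢
  intro k hk
  obtain ⟨hzk, hz⟩ := hz k hk
  refine ⟨Submodule.smul_mem _ c hzk, ?_⟩
  change c • z (k + 1) = T k (c • ⟨z k, hzk⟩)
  rw [hz, map_smul]
  rfl

def zSubmodule (n : ℕ) : Submodule ℂ (lp C ∞) where
  carrier := ZSet E T n
  zero_mem' := mem_zSet_of_forall_eq_zero E T fun _ _ => rfl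
  add_mem' := add_mem_zSet E T
  smul_mem' := smul_mem_zSet E T

lemma coe_iSup_zSubmodule : ((⨆ n, zSubmodule E T n : Submodule ℂ (lp C ∞)) : Set (lp C ∞)) =
    ⋃ n, ZSet E T n :=
  Submodule.coe_iSup_of_directed _ (Monotone.directed_le fun _ _ h => zSet_mono E T h)

lemma zAlg_eq_topologicalClosure :
    ZAlg E T = (⨆ n, zSubmodule E T n).topologicalClosure := by
  rw [Submodule.topologicalClosure_coe, coe_iSup_zSubmodule, ZAlg]

lemma c0Set_subset_zAlg : c0Set ⊆ ZAlg E T := by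
  intro z hz
  rw [ZAlg, Metric.mem_closure_iff]
  intro δ hδ
  obtain ⟨n, hn⟩ := Metric.tendsto_atTop.1 hz (δ / 2) (half_pos hδ)
  obtain ⟨u, hu, hzu⟩ := lp.exists_coeFn_eq_norm_sub_le z (fun k => if k < n then z k else 0)
    (half_pos hδ).le fun k => by
      split_ifs with hk
      · simp [(half_pos hδ).le]
      · simpa using (hn k (not_lt.1 hk)).le
  refine ⟨u, Set.mem_iUnion.2 ⟨n, mem_zSet_of_forall_eq_zero E T fun k hk => ?_⟩, ?_⟩
  · simp [hu, not_lt.2 hk]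
  · rw [dist_eq_norm]; linarith

section Admissible

variable [∀ n, StarRing (C n)] {ε : ℕ → ℝ}

variable {E T} in
lemma IsAdmissibleSystem.nonneg (hsys : IsAdmissibleSystem E T ε) (j : ℕ) : 0 ≤ ε (j + 1) :=
  (hsys.1 (j + 1) j.succ_pos).le

variable {E T} in
lemma IsAdmissibleSystem.summable (hsys : IsAdmissibleSystem E T ε) :
    Summable fun j => ε (j + 1) := by
  refine summable_of_sum_range_le (c := 1) hsys.nonneg fun N => ?_
  calc ∑ j ∈ Finset.range N, ε (j + 1) = ∑ k ∈ Finset.Icc 1 N, ε k := by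
        rw [Finset.range_eq_Ico, Finset.sum_Ico_add', ← Finset.Ico_add_one_right_eq_Icc]
    _ ≤ 1 := hsys.2.1 N

lemma star_mem_zSet [∀ n, CStarRing (C n)] (hsys : IsAdmissibleSystem E T ε) {n : ℕ} {z : lp C ∞}
    (hz : z ∈ ZSet E T n) : star z ∈ ZSet E T n := by
  obtain ⟨-, -, -, hsa, hmor, -⟩ := hsys
  rw [mem_zSet_iff] at hz ⊢
  intro k hk
  obtain ⟨hzk, hz⟩ := hz k hk
  have hstar : star (z k) ∈ E k := hsa k _ hzk
  refine ⟨hstar, ?_⟩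
  change star (z (k + 1)) = T k ⟨star (z k), hstar⟩
  rw [hz]
  exact ((hmor k).2.2.2 ⟨z k, hzk⟩ hstar).symm

lemma star_mem_zAlg [∀ n, CStarRing (C n)] (hsys : IsAdmissibleSystem E T ε) {a : lp C ∞}
    (ha : a ∈ ZAlg E T) : star a ∈ ZAlg E T := by
  refine map_mem_closure continuous_star ha fun z hz => ?_
  obtain ⟨n, hn⟩ := Set.mem_iUnion.1 hz
  exact Set.mem_iUnion.2 ⟨n, star_mem_zSet E T hsys hn⟩

lemma mul_mem_of_mem_zSet (hsys : IsAdmissibleSystem E T ε) {n k : ℕ} (hk : n < k)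
    {z w : lp C ∞} (hz : z ∈ ZSet E T n) (hw : w ∈ ZSet E T n) : z k * w k ∈ E k := by
  obtain ⟨j, rfl⟩ := Nat.exists_eq_add_of_lt hk
  rw [mem_zSet_iff] at hz hw
  obtain ⟨hzj, hz⟩ := hz (n + j) (Nat.le_add_right n j)
  obtain ⟨hwj, hw⟩ := hw (n + j) (Nat.le_add_right n j)
  rw [hz, hw]
  exact hsys.2.2.2.2.2 _ _ _

lemma norm_mul_sub_theta_le (hsys : IsAdmissibleSystem E T ε) {n p : ℕ} (hnp : n < p)
    {z w : lp C ∞} (hz : z ∈ ZSet E T n) (hw : w ∈ ZSet E T n) (x : E p)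
    (hx : (x : C p) = z p * w p) {k : ℕ} (hpk : p ≤ k) :
    ‖z k * w k - theta E T p x k‖ ≤
      (Real.exp (∑ j ∈ Finset.Ico p k, ε (j + 1)) - 1) * (‖z‖ * ‖w‖) := by
  induction k, hpk using Nat.le_induction with
  | base => simp [theta_self, hx]
  | succ k hpk ih =>
    have hnk : n ≤ k := by omega
    obtain ⟨hzk, hz'⟩ := (mem_zSet_iff E T).1 hz k hnk
    obtain ⟨hwk, hw'⟩ := (mem_zSet_iff E T).1 hw k hnk
    have hε := hsys.nonneg k
    set S := ∑ j ∈ Finset.Ico p k, ε (j + 1)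
    set M := ‖z‖ * ‖w‖
    have hzw : ‖z k‖ * ‖w k‖ ≤ M := mul_le_mul (lp.norm_apply_le_norm top_ne_zero z k)
      (lp.norm_apply_le_norm top_ne_zero w k) (norm_nonneg _) (norm_nonneg _)
    have hstep := (hsys.2.2.2.2.1 k).norm_mul_sub_le ⟨z k, hzk⟩ ⟨w k, hwk⟩
      ⟨theta E T p x k, theta_mem E T p x hpk⟩ (mul_mem_of_mem_zSet E T hsys (by omega) hz hw)
    rw [hz', hw', theta_succ E T p x hpk, Finset.sum_Ico_succ_top hpk, Real.exp_add]
    calc _ ≤ ε (k + 1) * ‖z k‖ * ‖w k‖ + (1 + ε (k + 1)) * ‖z k * w k - theta E T p x k‖ :=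
          hstep
      _ ≤ ε (k + 1) * M + (1 + ε (k + 1)) * ((Real.exp S - 1) * M) := by
          rw [mul_assoc]; gcongr
      _ = ((1 + ε (k + 1)) * Real.exp S - 1) * M := by ring
      _ ≤ (Real.exp (ε (k + 1)) * Real.exp S - 1) * M := by
          gcongr
          linarith [Real.add_one_le_exp (ε (k + 1))]
      _ = (Real.exp S * Real.exp (ε (k + 1)) - 1) * M := by ring

lemma exists_mem_zSet_norm_mul_sub_le (hsys : IsAdmissibleSystem E T ε) {n p : ℕ} (hnp : n < p)
    {z w : lp C ∞} (hz : z ∈ ZSet E T n) (hw : w ∈ ZSet E T n) :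
    ∃ u ∈ ZSet E T p, ‖z * w - u‖ ≤ (Real.exp (∑' j, ε (j + p + 1)) - 1) * (‖z‖ * ‖w‖) := by
  have hM : 0 ≤ (Real.exp (∑' j, ε (j + p + 1)) - 1) * (‖z‖ * ‖w‖) := by
    have := Real.one_le_exp (tsum_nonneg (fun j => hsys.nonneg (j + p)) : 0 ≤ ∑' j, ε (j + p + 1))
    have := norm_nonneg z
    have := norm_nonneg w
    positivity
  set x : E p := ⟨z p * w p, mul_mem_of_mem_zSet E T hsys hnp hz hw⟩
  obtain ⟨u, hu, hzwu⟩ := lp.exists_coeFn_eq_norm_sub_le (z * w)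
    (fun k => if p ≤ k then theta E T p x k else z k * w k) hM fun k => by
      split_ifs with hpk
      · refine (norm_mul_sub_theta_le E T hsys hnp hz hw x rfl hpk).trans ?_
        gcongr
        exact sum_Ico_le_tsum_nat_add hsys.summable hsys.nonneg p k
      · simpa using hM
  exact ⟨u, mem_zSet_of_eq_theta E T x fun k hk => by simp [hu, hk], hzwu⟩

lemma mul_mem_zAlg (hsys : IsAdmissibleSystem E T ε) {a b : lp C ∞} (ha : a ∈ ZAlg E T)
    (hb : b ∈ ZAlg E T) : a * b ∈ ZAlg E T := by
  refine isClosed_closure.closure_subset (map_mem_closure₂ continuous_mul ha hb fun z hz w hw => ?_)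
  obtain ⟨i, hi⟩ := Set.mem_iUnion.1 hz
  obtain ⟨j, hj⟩ := Set.mem_iUnion.1 hw
  have hz' := zSet_mono E T (le_max_left i j) hi
  have hw' := zSet_mono E T (le_max_right i j) hj
  have htail : Tendsto (fun p => (Real.exp (∑' j, ε (j + p + 1)) - 1) * (‖z‖ * ‖w‖))
      atTop (𝓝 0) := by
    have h := ((Real.continuous_exp.tendsto 0).comp (tendsto_sum_nat_add fun j => ε (j + 1)))
    simpa using (h.sub_const 1).mul_const (‖z‖ * ‖w‖)
  rw [Metric.mem_closure_iff]
  intro δ hδ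
  obtain ⟨p, hp, hpδ⟩ :=
    ((eventually_gt_atTop (max i j)).and (htail.eventually (gt_mem_nhds hδ))).exists
  obtain ⟨u, hu, hzwu⟩ := exists_mem_zSet_norm_mul_sub_le E T hsys hp hz' hw'
  exact ⟨u, Set.mem_iUnion.2 ⟨p, hu⟩, by rw [dist_eq_norm]; linarith⟩

end Admissible

end InductiveSystem

variable {C : ℕ → Type*} [∀ n, NonUnitalNormedRing (C n)] [∀ n, StarRing (C n)]
  [∀ n, CStarRing (C n)] [∀ n, NormedSpace ℂ (C n)] [∀ n, StarModule ℂ (C n)]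
  [∀ n, IsScalarTower ℂ (C n) (C n)] [∀ n, SMulCommClass ℂ (C n) (C n)]
  [∀ n, CompleteSpace (C n)]

/-- For an admissible inductive system, `Z` (the norm closure of
`⋃ n, Z_n` in `L = ℓ∞({C_k})`) is a closed self-adjoint subalgebra of `L`
(a C*-subalgebra) containing the ideal `c₀({C_k})`. -/
theorem ZAlg_isCStarSubalgebra (E : ∀ n, Submodule ℂ (C n)) (T : ∀ n, E n →ₗ[ℂ] E (n + 1))
    (ε : ℕ → ℝ) (hsys : IsAdmissibleSystem E T ε) :
    IsClosed (ZAlg E T) ∧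
    (0 : lp C ∞) ∈ ZAlg E T ∧
    (∀ a b, a ∈ ZAlg E T → b ∈ ZAlg E T → a + b ∈ ZAlg E T) ∧
    (∀ (c : ℂ) (a : lp C ∞), a ∈ ZAlg E T → c • a ∈ ZAlg E T) ∧
    (∀ a b, a ∈ ZAlg E T → b ∈ ZAlg E T → a * b ∈ ZAlg E T) ∧
    (∀ a, a ∈ ZAlg E T → star a ∈ ZAlg E T) ∧
    c0Set ⊆ ZAlg E T := by
  have hZ := zAlg_eq_topologicalClosure E T
  refine ⟨isClosed_closure, ?_, fun a b ha hb => ?_, fun c a ha => ?_,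
    fun a b => mul_mem_zAlg E T hsys, fun a => star_mem_zAlg E T hsys, c0Set_subset_zAlg E T⟩
  · rw [hZ]; exact zero_mem _
  · rw [hZ] at ha hb ⊢; exact add_mem ha hb
  · rw [hZ] at ha ⊢; exact Submodule.smul_mem _ c ha
end
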